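/- arXiv:1406.4680 — 3 statements merged into one kernel-verified Lean document; each statement's English description precedes it below -/
import Mathlib

section
/- Let $p, r$ be positive integers and consider the polynomial ring $\mathbb{Z}[x_1,\ldots,x_r;y_1,\ldots,y_{p+r-1}]$ (or work in the field of fractions). Then $\sum_{j=1}^{r} \frac{\prod_{i=1}^{p+r-1}(y_i-x_j)}{\prod_{i\in[1,r]\setminus\{j\}}(x_i-x_j)} = \sum_{1 \le c_1 < \cdots < c_p \le p+r-1} \; \prod_{i=1}^{p}(y_{c_i} - x_{c_i - i + 1})$, where the left-hand side is interpreted in the fraction field (assuming the $x_i$ are distinct indeterminates). -/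
set_option maxRecDepth 4000

open Finset MvPolynomial

/-- The field of rational functions in the indeterminates `x_j` (indexed by `Sum.inl j`)
and `y_i` (indexed by `Sum.inr i`). -/
noncomputable abbrev RatFld : Type := FractionRing (MvPolynomial (ℕ ⊕ ℕ) ℤ)

/-- The indeterminate `x_j` viewed in the fraction field. -/
noncomputable def xv (j : ℕ) : RatFld :=
  algebraMap (MvPolynomial (ℕ ⊕ ℕ) ℤ) RatFld (X (Sum.inl j))

/-- The indeterminate `y_i` viewed in the fraction field. -/
noncomputable def yv (i : ℕ) : RatFld :=
  algebraMap (MvPolynomial (ℕ ⊕ ℕ) ℤ) RatFld (X (Sum.inr i))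

section General

variable {F : Type*} [Field F]

private lemma prod_neg' {ι : Type*} (s : Finset ι) (f : ι → F) :
    ∏ i ∈ s, -(f i) = (-1) ^ s.card * ∏ i ∈ s, f i := by
  rw [show (fun i => -(f i)) = (fun i => (-1) * f i) from funext fun i => by ring]
  rw [Finset.prod_mul_distrib, Finset.prod_const]

private lemma basis_coeff {ι : Type*} [DecidableEq ι] (s : Finset ι) (v : ι → F)
    (hvs : Set.InjOn v s) {i : ι} (hi : i ∈ s) :
    (Lagrange.basis s v i).coeff (s.card - 1) = (∏ j ∈ s.erase i, (v i - v j))⁻¹ := by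
  have hd := Lagrange.natDegree_basis hvs hi
  rw [← hd, Polynomial.coeff_natDegree, Lagrange.basis, Polynomial.leadingCoeff_prod,
    ← Finset.prod_inv_distrib]
  refine Finset.prod_congr rfl fun j hj => ?_
  rw [Lagrange.basisDivisor, Polynomial.leadingCoeff_mul, Polynomial.leadingCoeff_C,
    (Polynomial.monic_X_sub_C (v j)).leadingCoeff, mul_one]

private lemma lagrange_sum {ι : Type*} [DecidableEq ι] (s : Finset ι) (v : ι → F)
    (hvs : Set.InjOn v s) (f : Polynomial F) (hf : f.degree < s.card) :
    ∑ i ∈ s, f.eval (v i) * (∏ j ∈ s.erase i, (v i - v j))⁻¹ = f.coeff (s.card - 1) := by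
  conv_rhs => rw [Lagrange.eq_interpolate hvs hf]
  rw [Lagrange.interpolate_apply, Polynomial.finset_sum_coeff]
  refine Finset.sum_congr rfl fun i hi => ?_
  rw [Polynomial.coeff_C_mul, basis_coeff s v hvs hi]

private lemma fac_natDegree (a : F) : (Polynomial.C a - Polynomial.X).natDegree = 1 := by
  rw [show (Polynomial.C a - Polynomial.X) = -(Polynomial.X - Polynomial.C a) by ring,
    Polynomial.natDegree_neg, Polynomial.natDegree_X_sub_C]

private lemma fac_leadingCoeff (a : F) : (Polynomial.C a - Polynomial.X).leadingCoeff = -1 := by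
  rw [show (Polynomial.C a - Polynomial.X) = -(Polynomial.X - Polynomial.C a) by ring,
    Polynomial.leadingCoeff_neg, (Polynomial.monic_X_sub_C a).leadingCoeff]

private lemma fac_ne_zero (a : F) : (Polynomial.C a - Polynomial.X) ≠ 0 := by
  intro h
  have := congrArg (Polynomial.coeff · 1) h
  simp [Polynomial.coeff_X_one] at this

private lemma poly_facts (y : ℕ → F) (r : ℕ) :
    ((∏ i ∈ Finset.Icc 1 r, (Polynomial.C (y i) - Polynomial.X)).natDegree = r) ∧
    ((∏ i ∈ Finset.Icc 1 r, (Polynomial.C (y i) - Polynomial.X)) ≠ 0) ∧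
    ((∏ i ∈ Finset.Icc 1 r, (Polynomial.C (y i) - Polynomial.X)).coeff r = (-1) ^ r) := by
  set f := ∏ i ∈ Finset.Icc 1 r, (Polynomial.C (y i) - Polynomial.X) with hf
  have hne : f ≠ 0 := Finset.prod_ne_zero_iff.2 fun i _ => fac_ne_zero (y i)
  have hdeg : f.natDegree = r := by
    rw [hf, Polynomial.natDegree_prod _ _ fun i _ => fac_ne_zero (y i)]
    simp [fac_natDegree]
  have hl : f.leadingCoeff = (-1) ^ r := by
    rw [hf, Polynomial.leadingCoeff_prod]
    simp [fac_leadingCoeff]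
  refine ⟨hdeg, hne, ?_⟩
  conv_lhs => rw [← hdeg]
  rw [Polynomial.coeff_natDegree, hl]

/-- The left-hand side, with `r` variables `x` and `n` variables `y`. -/
noncomputable def Lsum (x y : ℕ → F) (r n : ℕ) : F :=
  ∑ j ∈ Finset.Icc 1 r,
      (∏ i ∈ Finset.Icc 1 n, (y i - x j)) /
        (∏ i ∈ (Finset.Icc 1 r).erase j, (x i - x j))

/-- The right-hand side, over strictly increasing `p`-tuples in `Fin n`. -/
noncomputable def Rsum (x y : ℕ → F) (p n : ℕ) : F :=
  ∑ c ∈ Finset.univ.filter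
        (fun c : Fin p → Fin n => ∀ a b : Fin p, a < b → c a < c b),
        ∏ i : Fin p, (y ((c i : ℕ) + 1) - x ((c i : ℕ) + 1 - (i : ℕ)))

lemma Lsum_zero (x y : ℕ → F) (n : ℕ) : Lsum x y 0 n = 0 := by
  simp [Lsum]

lemma Rsum_zero (x y : ℕ → F) (n : ℕ) : Rsum x y 0 n = 1 := by
  rw [Rsum]
  rw [Finset.filter_true_of_mem (fun c _ => fun a => a.elim0)]
  simp

lemma Rsum_eq_zero (x y : ℕ → F) {p n : ℕ} (h : n < p) : Rsum x y p n = 0 := by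
  rw [Rsum, Finset.filter_false_of_mem, Finset.sum_empty]
  intro c _ hc
  have hinj : Function.Injective c := by
    have sm : StrictMono c := fun a b hab => hc a b hab
    exact sm.injective
  have := Fintype.card_le_of_injective c hinj
  simp at this; omega

lemma Lsum_one (x y : ℕ → F) (hx : ∀ i j : ℕ, i ≠ j → x i ≠ x j) (r : ℕ) :
    Lsum x y (r + 1) r = 1 := by
  classical
  obtain ⟨hdeg, hne, hcoeff⟩ := poly_facts y r
  set f := ∏ i ∈ Finset.Icc 1 r, (Polynomial.C (y i) - Polynomial.X) with hf
  have hcard : (Finset.Icc 1 (r + 1)).card = r + 1 := by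
    rw [Nat.card_Icc]; omega
  have hvs : Set.InjOn x (Finset.Icc 1 (r + 1) : Finset ℕ) := by
    intro a _ b _ h
    by_contra hne'
    exact hx a b hne' h
  have hdf : f.degree < ((Finset.Icc 1 (r + 1)).card : WithBot ℕ) := by
    rw [hcard, Polynomial.degree_eq_natDegree hne, hdeg]
    exact_mod_cast Nat.lt_succ_self r
  have key := lagrange_sum (Finset.Icc 1 (r + 1)) x hvs f hdf
  rw [hcard] at key
  simp only [Nat.add_sub_cancel] at key
  have heval : ∀ j : ℕ, f.eval (x j) = ∏ i ∈ Finset.Icc 1 r, (y i - x j) := by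
    intro j
    rw [hf, Polynomial.eval_prod]
    simp
  rw [Lsum]
  have step : ∀ j ∈ Finset.Icc 1 (r + 1),
      (∏ i ∈ Finset.Icc 1 r, (y i - x j)) /
        (∏ i ∈ (Finset.Icc 1 (r + 1)).erase j, (x i - x j))
      = (-1) ^ r * (f.eval (x j) * (∏ i ∈ (Finset.Icc 1 (r + 1)).erase j, (x j - x i))⁻¹) := by
    intro j hj
    have hce : ((Finset.Icc 1 (r + 1)).erase j).card = r := by
      rw [Finset.card_erase_of_mem hj, hcard]; omega
    have hpn : ∏ i ∈ (Finset.Icc 1 (r + 1)).erase j, (x i - x j)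
        = (-1) ^ r * ∏ i ∈ (Finset.Icc 1 (r + 1)).erase j, (x j - x i) := by
      calc ∏ i ∈ (Finset.Icc 1 (r + 1)).erase j, (x i - x j)
          = ∏ i ∈ (Finset.Icc 1 (r + 1)).erase j, -(x j - x i) :=
            Finset.prod_congr rfl fun i _ => by ring
        _ = (-1) ^ ((Finset.Icc 1 (r + 1)).erase j).card
              * ∏ i ∈ (Finset.Icc 1 (r + 1)).erase j, (x j - x i) := prod_neg' _ _
        _ = _ := by rw [hce]
    rw [hpn, heval, div_eq_mul_inv, mul_inv]
    rw [show ((-1 : F) ^ r)⁻¹ = (-1) ^ r by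
      rw [← inv_pow, inv_neg, inv_one]]
    ring
  rw [Finset.sum_congr rfl step, ← Finset.mul_sum, key, hcoeff, ← mul_pow]
  norm_num

lemma Lsum_rec (x y : ℕ → F) (hx : ∀ i j : ℕ, i ≠ j → x i ≠ x j) (r n : ℕ) :
    Lsum x y (r + 1) (n + 1)
      = Lsum x y r n + (y (n + 1) - x (r + 1)) * Lsum x y (r + 1) n := by
  have hIy : Finset.Icc 1 (n + 1) = insert (n + 1) (Finset.Icc 1 n) :=
    (Finset.insert_Icc_right_eq_Icc_add_one (by omega)).symm
  have hIx : Finset.Icc 1 (r + 1) = insert (r + 1) (Finset.Icc 1 r) :=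
    (Finset.insert_Icc_right_eq_Icc_add_one (by omega)).symm
  have hnm : (r + 1) ∉ Finset.Icc 1 r := by simp
  rw [Lsum, Lsum, Lsum, hIx, Finset.sum_insert hnm, Finset.sum_insert hnm,
    Finset.erase_insert hnm]
  have htop : ∏ i ∈ Finset.Icc 1 (n + 1), (y i - x (r + 1))
      = (y (n + 1) - x (r + 1)) * ∏ i ∈ Finset.Icc 1 n, (y i - x (r + 1)) := by
    rw [hIy, Finset.prod_insert (by simp)]
  rw [htop, mul_add, ← mul_div_assoc]
  have hmain : (∑ j ∈ Finset.Icc 1 r, (∏ i ∈ Finset.Icc 1 (n + 1), (y i - x j)) /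
        ∏ i ∈ (insert (r + 1) (Finset.Icc 1 r)).erase j, (x i - x j))
      = (∑ j ∈ Finset.Icc 1 r, (∏ i ∈ Finset.Icc 1 n, (y i - x j)) /
          ∏ i ∈ (Finset.Icc 1 r).erase j, (x i - x j))
        + (y (n + 1) - x (r + 1)) * ∑ j ∈ Finset.Icc 1 r,
            (∏ i ∈ Finset.Icc 1 n, (y i - x j)) /
              ∏ i ∈ (insert (r + 1) (Finset.Icc 1 r)).erase j, (x i - x j) := by
    rw [Finset.mul_sum, ← Finset.sum_add_distrib]
    refine Finset.sum_congr rfl fun j hj => ?_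
    simp only [Finset.mem_Icc] at hj
    have hjr : j ≠ r + 1 := by omega
    have hEr : (insert (r + 1) (Finset.Icc 1 r)).erase j
        = insert (r + 1) ((Finset.Icc 1 r).erase j) :=
      Finset.erase_insert_of_ne hjr.symm
    have hnm2 : (r + 1) ∉ (Finset.Icc 1 r).erase j := fun h => hnm (Finset.mem_of_mem_erase h)
    have hnum : ∏ i ∈ Finset.Icc 1 (n + 1), (y i - x j)
        = (y (n + 1) - x j) * ∏ i ∈ Finset.Icc 1 n, (y i - x j) := by
      rw [hIy, Finset.prod_insert (by simp)]
    rw [hEr, Finset.prod_insert hnm2, hnum]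
    have hd : x (r + 1) - x j ≠ 0 := sub_ne_zero.2 (hx _ _ (by omega))
    have hE : ∏ i ∈ (Finset.Icc 1 r).erase j, (x i - x j) ≠ 0 := by
      rw [Finset.prod_ne_zero_iff]
      intro i hi
      exact sub_ne_zero.2 (hx i j (Finset.ne_of_mem_erase hi))
    field_simp
    ring
  rw [hmain]
  ring

lemma Rsum_rec (x y : ℕ → F) (p n : ℕ) :
    Rsum x y (p + 1) (n + 1)
      = Rsum x y (p + 1) n + (y (n + 1) - x (n + 1 - p)) * Rsum x y p n := by
  classical
  rw [Rsum,
    ← Finset.sum_filter_add_sum_filter_not _ (fun c : Fin (p + 1) → Fin (n + 1) =>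
        c (Fin.last p) = Fin.last n)]
  have h2 : ∑ c ∈ (Finset.univ.filter
        (fun c : Fin (p + 1) → Fin (n + 1) => ∀ a b : Fin (p + 1), a < b → c a < c b)).filter
          (fun c => ¬ c (Fin.last p) = Fin.last n),
        ∏ i : Fin (p + 1), (y ((c i : ℕ) + 1) - x ((c i : ℕ) + 1 - (i : ℕ)))
      = Rsum x y (p + 1) n := by
    rw [Rsum]
    refine Finset.sum_bij' (i := fun c hc => fun k : Fin (p + 1) =>
        (⟨(c k : ℕ), ?_⟩ : Fin n))
      (j := fun c' _ => fun k => (c' k).castSucc) ?_ ?_ ?_ ?_ ?_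
    · -- bound : (c k : ℕ) < n
      simp only [Finset.mem_filter, Finset.mem_univ, true_and] at hc
      obtain ⟨hsm, hne⟩ := hc
      have hle : c k ≤ c (Fin.last p) := by
        rcases eq_or_lt_of_le (Fin.le_last k) with h | h
        · rw [h]
        · exact le_of_lt (hsm _ _ h)
      have hlast : c (Fin.last p) < Fin.last n := lt_of_le_of_ne (Fin.le_last _) hne
      have := lt_of_le_of_lt hle hlast
      simpa [Fin.lt_iff_val_lt_val] using this
    · -- i maps into target
      intro c hc
      simp only [Finset.mem_filter, Finset.mem_univ, true_and] at hc ⊢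
      intro a b hab
      exact Fin.mk_lt_mk.mpr (Fin.lt_def.mp (hc.1 a b hab))
    · -- j maps into source
      intro c' hc'
      simp only [Finset.mem_filter, Finset.mem_univ, true_and] at hc' ⊢
      constructor
      · intro a b hab
        exact Fin.castSucc_lt_castSucc_iff.mpr (hc' a b hab)
      · exact (Fin.castSucc_lt_last _).ne
    · -- left inverse
      intro c hc
      funext k
      apply Fin.ext
      simp
    · -- right inverse
      intro c' hc'
      funext k
      apply Fin.ext
      simp
    · -- summand equality
      intro c hc
      exact Finset.prod_congr rfl fun k _ => rfl
  have h1 : ∑ c ∈ (Finset.univ.filter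
        (fun c : Fin (p + 1) → Fin (n + 1) => ∀ a b : Fin (p + 1), a < b → c a < c b)).filter
          (fun c => c (Fin.last p) = Fin.last n),
        ∏ i : Fin (p + 1), (y ((c i : ℕ) + 1) - x ((c i : ℕ) + 1 - (i : ℕ)))
      = (y (n + 1) - x (n + 1 - p)) * Rsum x y p n := by
    rw [Rsum, Finset.mul_sum]
    refine Finset.sum_bij' (i := fun c hc => fun k : Fin p =>
        (⟨(c k.castSucc : ℕ), ?_⟩ : Fin n))
      (j := fun c' _ => Fin.snoc (fun k => (c' k).castSucc) (Fin.last n)) ?_ ?_ ?_ ?_ ?_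
    · -- bound : (c k.castSucc : ℕ) < n
      simp only [Finset.mem_filter, Finset.mem_univ, true_and] at hc
      obtain ⟨hsm, heq⟩ := hc
      have hlt : c k.castSucc < Fin.last n := by
        rw [← heq]
        exact hsm _ _ (Fin.castSucc_lt_last k)
      exact Fin.lt_def.mp hlt
    · -- i maps into target
      intro c hc
      simp only [Finset.mem_filter, Finset.mem_univ, true_and] at hc ⊢
      intro a b hab
      exact Fin.mk_lt_mk.mpr (Fin.lt_def.mp
        (hc.1 _ _ (Fin.castSucc_lt_castSucc_iff.mpr hab)))
    · -- j maps into source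
      intro c' hc'
      simp only [Finset.mem_filter, Finset.mem_univ, true_and] at hc' ⊢
      refine ⟨?_, Fin.snoc_last _ _⟩
      intro a b hab
      rcases Fin.eq_castSucc_or_eq_last b with ⟨b0, rfl⟩ | rfl
      · have halt : a < Fin.last p := lt_trans hab (Fin.castSucc_lt_last b0)
        obtain ⟨a0, rfl⟩ := Fin.exists_castSucc_eq.2 halt.ne
        rw [Fin.snoc_castSucc, Fin.snoc_castSucc]
        exact Fin.castSucc_lt_castSucc_iff.mpr
          (hc' _ _ (Fin.castSucc_lt_castSucc_iff.mp hab))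
      · obtain ⟨a0, rfl⟩ := Fin.exists_castSucc_eq.2 hab.ne
        rw [Fin.snoc_castSucc, Fin.snoc_last]
        exact Fin.castSucc_lt_last _
    · -- left inverse
      intro c hc
      simp only [Finset.mem_filter, Finset.mem_univ, true_and] at hc
      funext k
      rcases Fin.eq_castSucc_or_eq_last k with ⟨k0, rfl⟩ | rfl
      · simp only [Fin.snoc_castSucc]
        apply Fin.ext
        simp
      · simp only [Fin.snoc_last]
        exact hc.2.symm
    · -- right inverse
      intro c' hc'
      funext k
      apply Fin.ext
      simp [Fin.snoc_castSucc]
    · -- summand equality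
      intro c hc
      simp only [Finset.mem_filter, Finset.mem_univ, true_and] at hc
      rw [Fin.prod_univ_castSucc]
      rw [show ((c (Fin.last p) : ℕ)) = n from by rw [hc.2]; rfl]
      rw [show ((Fin.last p : ℕ)) = p from rfl]
      rw [mul_comm]
      congr 1
  rw [h1, h2]
  ring

lemma master (x y : ℕ → F) (hx : ∀ i j : ℕ, i ≠ j → x i ≠ x j) :
    ∀ p r n : ℕ, p + r = n + 1 → 1 ≤ r → Lsum x y r n = Rsum x y p n := by
  intro p
  induction p with
  | zero =>
    intro r n h _
    obtain rfl : r = n + 1 := by omega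
    rw [Rsum_zero, Lsum_one x y hx n]
  | succ p ih =>
    have inner : ∀ r : ℕ, Lsum x y r (p + r) = Rsum x y (p + 1) (p + r) := by
      intro r
      induction r with
      | zero =>
        rw [show p + 0 = p from rfl, Lsum_zero]
        exact (Rsum_eq_zero x y (by omega)).symm
      | succ r ihr =>
        rw [show p + (r + 1) = (p + r) + 1 from rfl]
        rw [Lsum_rec x y hx r (p + r), Rsum_rec x y p (p + r)]
        rw [show p + r + 1 - p = r + 1 from by omega]
        rw [ihr, ih (r + 1) (p + r) (by omega) (by omega)]
    intro r n h hr
    obtain rfl : n = p + r := by omega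
    exact inner r

end General

/-- Lemma A.1 of the paper:
`∑_{j=1}^r (∏_{i=1}^{p+r-1} (y_i - x_j)) / (∏_{i ≠ j} (x_i - x_j))
  = ∑_{1 ≤ c_1 < ⋯ < c_p ≤ p+r-1} ∏_{i=1}^p (y_{c_i} - x_{c_i - i + 1})`,
where the right-hand sum runs over strictly increasing sequences, encoded as
strictly monotone functions `c : Fin p → Fin (p+r-1)` (0-based, so the 1-based
value of the `(i+1)`-st entry is `c i + 1`). -/
theorem schur_identity (p r : ℕ) (hp : 1 ≤ p) (hr : 1 ≤ r) :
    ∑ j ∈ Finset.Icc 1 r,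
      (∏ i ∈ Finset.Icc 1 (p + r - 1), (yv i - xv j)) /
        (∏ i ∈ (Finset.Icc 1 r).erase j, (xv i - xv j))
    = ∑ c ∈ Finset.univ.filter
        (fun c : Fin p → Fin (p + r - 1) => ∀ a b : Fin p, a < b → c a < c b),
        ∏ i : Fin p, (yv ((c i : ℕ) + 1) - xv ((c i : ℕ) + 1 - (i : ℕ))) := by
  have hx : ∀ i j : ℕ, i ≠ j → xv i ≠ xv j := by
    intro i j hij h
    apply hij
    have halg : Function.Injective (algebraMap (MvPolynomial (ℕ ⊕ ℕ) ℤ) RatFld) :=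
      IsFractionRing.injective _ _
    exact Sum.inl.inj (MvPolynomial.X_injective (halg h))
  exact master xv yv hx p r (p + r - 1) (by omega) hr
end

section
/- Fix integers $p \ge 1$, $r \ge 1$, $1 \le k \le p-1$, and a strictly increasing sequence $f_1 < \cdots < f_k$ in $[1, p+r-1]$. For each strictly increasing sequence $c_1 < \cdots < c_p$ in $[1,p+r-1]$ containing $\{f_1,\ldots,f_k\}$ as a subsequence, define the multiset $M(c) = \{c_i - i + 1 : c_i \notin \{f_1,\ldots,f_k\}\}$ (of size $p-k$, with values in $[1,r]$). Then the map $c \mapsto M(c)$ is injective: if $c \ne d$ are two such sequences, then $M(c) \ne M(d)$ as multisets. -/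
open Finset

/-- The multiset `M(c) = {c_i - i + 1 : i ∈ [1,p], c_i ∉ F}` associated to a
(1-based) sequence `c` and a set `F` of forbidden values. -/
noncomputable def seqMultiset (p : ℕ) (F : Finset ℕ) (c : ℕ → ℕ) : Multiset ℕ :=
  ((Finset.Icc 1 p).filter (fun i => c i ∉ F)).val.map (fun i => c i - i + 1)

def holesCard (A : Finset ℕ) (v : ℕ) : ℕ := ((Finset.Icc 1 v) \ A).card

lemma holes_mono (A : Finset ℕ) {u v : ℕ} (h : u ≤ v) : holesCard A u ≤ holesCard A v :=
  Finset.card_le_card (Finset.sdiff_subset_sdiff (Finset.Icc_subset_Icc_right h) le_rfl)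

lemma holes_lt (A : Finset ℕ) {u v : ℕ} (h : u < v) (hv1 : 1 ≤ v) (hvA : v ∉ A) :
    holesCard A u < holesCard A v := by
  apply Finset.card_lt_card
  refine (Finset.ssubset_iff_of_subset
    (Finset.sdiff_subset_sdiff (Finset.Icc_subset_Icc_right h.le) le_rfl)).2 ⟨v, ?_, ?_⟩
  · simp [Finset.mem_sdiff, Finset.mem_Icc, hv1, hvA]
  · intro hmem
    rw [Finset.mem_sdiff, Finset.mem_Icc] at hmem
    omega

lemma holes_eq {N : ℕ} {S T : Finset ℕ} (hS : S ⊆ Finset.Icc 1 N) (hT : T ⊆ Finset.Icc 1 N)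
    (hcard : S.card = T.card) {v : ℕ} (hvN : v ≤ N)
    (habove : ∀ u, v < u → (u ∈ S ↔ u ∈ T)) : holesCard S v = holesCard T v := by
  have hsplit : ∀ A : Finset ℕ,
      (Finset.Icc 1 N \ A).card = (Finset.Icc 1 v \ A).card + (Finset.Icc (v+1) N \ A).card := by
    intro A
    have hu : Finset.Icc 1 N \ A = (Finset.Icc 1 v \ A) ∪ (Finset.Icc (v+1) N \ A) := by
      rw [← Finset.union_sdiff_distrib]
      congr 1
      ext u
      simp only [Finset.mem_union, Finset.mem_Icc]
      omega
    rw [hu, Finset.card_union_of_disjoint]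
    rw [Finset.disjoint_left]
    intro a ha hb
    rw [Finset.mem_sdiff, Finset.mem_Icc] at ha hb
    omega
  have htail : Finset.Icc (v+1) N \ S = Finset.Icc (v+1) N \ T := by
    ext u
    simp only [Finset.mem_sdiff, Finset.mem_Icc]
    constructor
    · rintro ⟨⟨h1, h2⟩, h3⟩; exact ⟨⟨h1, h2⟩, fun hm => h3 ((habove u (by omega)).2 hm)⟩
    · rintro ⟨⟨h1, h2⟩, h3⟩; exact ⟨⟨h1, h2⟩, fun hm => h3 ((habove u (by omega)).1 hm)⟩
  have h1 := hsplit S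
  have h2 := hsplit T
  have hS' : (Finset.Icc 1 N \ S).card = N - S.card := by
    rw [Finset.card_sdiff_of_subset hS, Nat.card_Icc]; omega
  have hT' : (Finset.Icc 1 N \ T).card = N - T.card := by
    rw [Finset.card_sdiff_of_subset hT, Nat.card_Icc]; omega
  have hle : S.card ≤ N := by
    have := Finset.card_le_card hS
    rwa [Nat.card_Icc] at this
  unfold holesCard
  rw [htail] at h1
  omega

lemma index_card {p : ℕ} {c : ℕ → ℕ} (hc : StrictMonoOn c (Set.Icc 1 p))
    (h1 : ∀ j ∈ Finset.Icc 1 p, 1 ≤ c j)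
    {i : ℕ} (hi : i ∈ Finset.Icc 1 p) :
    (((Finset.Icc 1 p).image c) ∩ Finset.Icc 1 (c i)).card = i := by
  rw [Finset.mem_Icc] at hi
  have hfilt : ((Finset.Icc 1 p).image c) ∩ Finset.Icc 1 (c i)
      = ((Finset.Icc 1 i).image c) := by
    ext u
    simp only [Finset.mem_inter, Finset.mem_image, Finset.mem_Icc]
    constructor
    · rintro ⟨⟨j, ⟨hj1, hj2⟩, rfl⟩, hu1, hu2⟩
      refine ⟨j, ⟨hj1, ?_⟩, rfl⟩
      by_contra hji
      exact absurd hu2 (not_le.2 (hc (by simp [Set.mem_Icc]; omega)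
        (by simp [Set.mem_Icc]; omega) (by omega)))
    · rintro ⟨j, ⟨hj1, hj2⟩, rfl⟩
      have hjp : j ∈ Finset.Icc 1 p := Finset.mem_Icc.2 ⟨hj1, by omega⟩
      refine ⟨⟨j, Finset.mem_Icc.1 hjp, rfl⟩, h1 j hjp, ?_⟩
      rcases eq_or_lt_of_le hj2 with rfl | hlt
      · exact le_rfl
      · exact le_of_lt (hc (by simp [Set.mem_Icc]; omega) (by simp [Set.mem_Icc]; omega) hlt)
  rw [hfilt, Finset.card_image_of_injOn, Nat.card_Icc]
  · omega
  · exact hc.injOn.mono (by intro x hx; simp [Finset.mem_Icc, Set.mem_Icc] at *; omega)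

lemma le_c {p : ℕ} {c : ℕ → ℕ} (hc : StrictMonoOn c (Set.Icc 1 p))
    (h1 : ∀ j ∈ Finset.Icc 1 p, 1 ≤ c j)
    {i : ℕ} (hi : i ∈ Finset.Icc 1 p) : i ≤ c i := by
  have h := index_card hc h1 hi
  calc i = (((Finset.Icc 1 p).image c) ∩ Finset.Icc 1 (c i)).card := h.symm
    _ ≤ (Finset.Icc 1 (c i)).card := Finset.card_le_card Finset.inter_subset_right
    _ = c i := by rw [Nat.card_Icc]; omega

lemma sub_eq_holes {p : ℕ} {c : ℕ → ℕ} (hc : StrictMonoOn c (Set.Icc 1 p))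
    (h1 : ∀ j ∈ Finset.Icc 1 p, 1 ≤ c j)
    {i : ℕ} (hi : i ∈ Finset.Icc 1 p) :
    c i - i = ((Finset.Icc 1 (c i)) \ ((Finset.Icc 1 p).image c)).card := by
  have h := index_card hc h1 hi
  have h2 : ((Finset.Icc 1 (c i)) \ ((Finset.Icc 1 p).image c)).card
      + ((Finset.Icc 1 (c i)) ∩ ((Finset.Icc 1 p).image c)).card = (Finset.Icc 1 (c i)).card :=
    Finset.card_sdiff_add_card_inter _ _
  rw [Finset.inter_comm] at h2
  rw [h, Nat.card_Icc] at h2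
  omega


lemma countP_seq (p H : ℕ) (F : Finset ℕ) (c : ℕ → ℕ) :
    Multiset.countP (fun x => H + 1 ≤ x) (seqMultiset p F c)
      = ((Finset.Icc 1 p).filter (fun i => c i ∉ F ∧ H + 1 ≤ c i - i + 1)).card := by
  rw [seqMultiset, Multiset.countP_map]
  rw [← Finset.filter_val, Finset.filter_filter]
  rfl

lemma injOn_coe {p : ℕ} {c : ℕ → ℕ} (hc : StrictMonoOn c (Set.Icc 1 p)) :
    Set.InjOn c ↑(Finset.Icc 1 p) := by
  rw [Finset.coe_Icc]; exact hc.injOn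

lemma key_lemma (p N : ℕ) (F : Finset ℕ) (c d : ℕ → ℕ)
    (hc : StrictMonoOn c (Set.Icc 1 p)) (hcr : ∀ i ∈ Finset.Icc 1 p, c i ∈ Finset.Icc 1 N)
    (hd : StrictMonoOn d (Set.Icc 1 p)) (hdr : ∀ i ∈ Finset.Icc 1 p, d i ∈ Finset.Icc 1 N)
    (hFT : F ⊆ (Finset.Icc 1 p).image d)
    (v : ℕ) (hvS : v ∈ (Finset.Icc 1 p).image c) (hvT : v ∉ (Finset.Icc 1 p).image d)
    (hmax : ∀ u, v < u → (u ∈ (Finset.Icc 1 p).image c ↔ u ∈ (Finset.Icc 1 p).image d)) :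
    seqMultiset p F c ≠ seqMultiset p F d := by
  set S := (Finset.Icc 1 p).image c with hSdef
  set T := (Finset.Icc 1 p).image d with hTdef
  have hc1 : ∀ j ∈ Finset.Icc 1 p, 1 ≤ c j := fun j hj => (Finset.mem_Icc.1 (hcr j hj)).1
  have hd1 : ∀ j ∈ Finset.Icc 1 p, 1 ≤ d j := fun j hj => (Finset.mem_Icc.1 (hdr j hj)).1
  have hSsub : S ⊆ Finset.Icc 1 N := Finset.image_subset_iff.2 hcr
  have hTsub : T ⊆ Finset.Icc 1 N := Finset.image_subset_iff.2 hdr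
  have hScard : S.card = T.card := by
    rw [hSdef, hTdef, Finset.card_image_of_injOn (injOn_coe hc),
      Finset.card_image_of_injOn (injOn_coe hd)]
  obtain ⟨j, hj, hcj⟩ := Finset.mem_image.1 hvS
  have hv1 : 1 ≤ v := (Finset.mem_Icc.1 (hSsub hvS)).1
  have hvN : v ≤ N := (Finset.mem_Icc.1 (hSsub hvS)).2
  set H := holesCard S v with hHdef
  have hHT : holesCard T v = H := (holes_eq hSsub hTsub hScard hvN hmax).symm
  have hvF : v ∉ F := fun hmem => hvT (hFT hmem)
  -- condition equivalence for d
  have hdcond : ∀ i ∈ Finset.Icc 1 p, ((H + 1 ≤ d i - i + 1) ↔ v < d i) := by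
    intro i hi
    have hsub : d i - i = holesCard T (d i) := sub_eq_holes hd hd1 hi
    have hile : i ≤ d i := le_c hd hd1 hi
    constructor
    · intro h
      by_contra hle
      push_neg at hle
      have hne : d i ≠ v := fun he => hvT (he ▸ Finset.mem_image_of_mem d hi)
      have hlt : holesCard T (d i) < holesCard T v := holes_lt T (by omega) hv1 hvT
      rw [hHT] at hlt
      omega
    · intro h
      have : H ≤ holesCard T (d i) := hHT ▸ holes_mono T h.le
      omega
  -- condition implication for c
  have hccond : ∀ i ∈ Finset.Icc 1 p, v ≤ c i → (H + 1 ≤ c i - i + 1) := by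
    intro i hi h
    have hsub : c i - i = holesCard S (c i) := sub_eq_holes hc hc1 hi
    have : H ≤ holesCard S (c i) := holes_mono S h
    omega
  intro heq
  have hcnt : Multiset.countP (fun x => H + 1 ≤ x) (seqMultiset p F c)
      = Multiset.countP (fun x => H + 1 ≤ x) (seqMultiset p F d) := by rw [heq]
  rw [countP_seq, countP_seq] at hcnt
  -- rewrite d-side filter
  have hd_eq : (Finset.Icc 1 p).filter (fun i => d i ∉ F ∧ H + 1 ≤ d i - i + 1)
      = (Finset.Icc 1 p).filter (fun i => d i ∉ F ∧ v < d i) := by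
    apply Finset.filter_congr
    intro i hi
    simp only [and_congr_right_iff]
    intro _
    exact hdcond i hi
  -- strictly fewer on the d side
  set Bc' := (Finset.Icc 1 p).filter (fun i => c i ∉ F ∧ v < c i) with hBc'
  set Bc := (Finset.Icc 1 p).filter (fun i => c i ∉ F ∧ v ≤ c i) with hBc
  have hBc'B : Bc' ⊂ Bc := by
    have hsub : Bc' ⊆ Bc := by
      intro i hi
      rw [Finset.mem_filter] at hi ⊢
      exact ⟨hi.1, hi.2.1, hi.2.2.le⟩
    refine (Finset.ssubset_iff_of_subset hsub).2 ⟨j, ?_, ?_⟩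
    · rw [Finset.mem_filter]; exact ⟨hj, hcj ▸ hvF, le_of_eq hcj.symm⟩
    · rw [Finset.mem_filter]; push_neg; intro _ _; omega
  have hBcsub : Bc ⊆ (Finset.Icc 1 p).filter (fun i => c i ∉ F ∧ H + 1 ≤ c i - i + 1) := by
    intro i hi
    rw [Finset.mem_filter] at hi ⊢
    exact ⟨hi.1, hi.2.1, hccond i hi.1 hi.2.2⟩
  -- equal cardinalities of the strict-above parts
  have himg : ∀ (e : ℕ → ℕ), StrictMonoOn e (Set.Icc 1 p) →
      ((Finset.Icc 1 p).filter (fun i => e i ∉ F ∧ v < e i)).card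
        = (((Finset.Icc 1 p).image e).filter (fun u => u ∉ F ∧ v < u)).card := by
    intro e he
    have h := Finset.filter_image (s := Finset.Icc 1 p) (f := e)
      (p := fun u => u ∉ F ∧ v < u)
    rw [h, Finset.card_image_of_injOn
      ((injOn_coe he).mono (Finset.coe_subset.2 (Finset.filter_subset _ _)))]
  have hST' : S.filter (fun u => u ∉ F ∧ v < u) = T.filter (fun u => u ∉ F ∧ v < u) := by
    ext u
    simp only [Finset.mem_filter]
    constructor
    · rintro ⟨hu, h1, h2⟩; exact ⟨(hmax u h2).1 hu, h1, h2⟩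
    · rintro ⟨hu, h1, h2⟩; exact ⟨(hmax u h2).2 hu, h1, h2⟩
  have hfinal : Bc'.card = ((Finset.Icc 1 p).filter (fun i => d i ∉ F ∧ v < d i)).card := by
    rw [hBc', himg c hc, himg d hd, ← hSdef, ← hTdef, hST']
  have h1 := Finset.card_lt_card hBc'B
  have h2 := Finset.card_le_card hBcsub
  rw [hd_eq] at hcnt
  omega

/-- Injectivity of `c ↦ M(c)`: two distinct strictly increasing sequences
`c, d : [1,p] → [1,p+r-1]` both containing the fixed strictly increasing
sequence `F = {f_1 < ⋯ < f_k}` as a subsequence have distinct associated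
multisets `M(c) ≠ M(d)`. -/
theorem seqMultiset_injective (p r k : ℕ) (hp : 1 ≤ p) (hr : 1 ≤ r)
    (hk1 : 1 ≤ k) (hk2 : k ≤ p - 1)
    (F : Finset ℕ) (hF : F ⊆ Finset.Icc 1 (p + r - 1)) (hFcard : F.card = k)
    (c d : ℕ → ℕ)
    (hc : StrictMonoOn c (Set.Icc 1 p))
    (hcr : ∀ i ∈ Finset.Icc 1 p, c i ∈ Finset.Icc 1 (p + r - 1))
    (hcF : F ⊆ (Finset.Icc 1 p).image c)
    (hd : StrictMonoOn d (Set.Icc 1 p))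
    (hdr : ∀ i ∈ Finset.Icc 1 p, d i ∈ Finset.Icc 1 (p + r - 1))
    (hdF : F ⊆ (Finset.Icc 1 p).image d)
    (hne : ∃ i ∈ Finset.Icc 1 p, c i ≠ d i) :
    seqMultiset p F c ≠ seqMultiset p F d := by
  set S := (Finset.Icc 1 p).image c with hSdef
  set T := (Finset.Icc 1 p).image d with hTdef
  have hScard : S.card = p := by
    rw [hSdef, Finset.card_image_of_injOn (injOn_coe hc), Nat.card_Icc]
    omega
  have hST : S ≠ T := by
    intro hEq
    obtain ⟨i, hi, hne'⟩ := hne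
    rw [Finset.mem_Icc] at hi
    have hmemc : ∀ j : Fin p, c (j.1 + 1) ∈ S := by
      intro j
      exact Finset.mem_image_of_mem c (Finset.mem_Icc.2 ⟨by omega, by omega⟩)
    have hmemd : ∀ j : Fin p, d (j.1 + 1) ∈ S := by
      intro j
      rw [hEq]
      exact Finset.mem_image_of_mem d (Finset.mem_Icc.2 ⟨by omega, by omega⟩)
    have hmonoc : StrictMono (fun j : Fin p => c (j.1 + 1)) := by
      intro a b hab
      exact hc (by simp [Set.mem_Icc]) (by simp [Set.mem_Icc]) (by omega)
    have hmonod : StrictMono (fun j : Fin p => d (j.1 + 1)) := by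
      intro a b hab
      exact hd (by simp [Set.mem_Icc]) (by simp [Set.mem_Icc]) (by omega)
    have h1 := Finset.orderEmbOfFin_unique hScard hmemc hmonoc
    have h2 := Finset.orderEmbOfFin_unique hScard hmemd hmonod
    have h3 : c (( ⟨i - 1, by omega⟩ : Fin p).1 + 1) = d ((⟨i - 1, by omega⟩ : Fin p).1 + 1) := by
      rw [congrFun h1, congrFun h2]
    simp only [] at h3
    have : i - 1 + 1 = i := by omega
    rw [this] at h3
    exact hne' h3
  have hW : ((S \ T) ∪ (T \ S)).Nonempty := by
    rw [Finset.nonempty_iff_ne_empty]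
    intro hEmpty
    rw [Finset.union_eq_empty, Finset.sdiff_eq_empty_iff_subset,
      Finset.sdiff_eq_empty_iff_subset] at hEmpty
    exact hST (Finset.Subset.antisymm hEmpty.1 hEmpty.2)
  set v := ((S \ T) ∪ (T \ S)).max' hW with hv
  have hvmem := ((S \ T) ∪ (T \ S)).max'_mem hW
  have hmax : ∀ u, v < u → (u ∈ S ↔ u ∈ T) := by
    intro u hu
    by_contra hiff
    have humem : u ∈ (S \ T) ∪ (T \ S) := by
      rw [Finset.mem_union, Finset.mem_sdiff, Finset.mem_sdiff]
      by_cases h1 : u ∈ S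
      · left; exact ⟨h1, fun h2 => hiff ⟨fun _ => h2, fun _ => h1⟩⟩
      · right
        refine ⟨?_, h1⟩
        by_contra h2
        exact hiff ⟨fun h => absurd h h1, fun h => absurd h h2⟩
    exact absurd (Finset.le_max' _ u humem) (by omega)
  rw [Finset.mem_union, Finset.mem_sdiff, Finset.mem_sdiff] at hvmem
  rcases hvmem with ⟨h1, h2⟩ | ⟨h1, h2⟩
  · exact key_lemma p (p + r - 1) F c d hc hcr hd hdr hdF v h1 h2 hmax
  · exact (key_lemma p (p + r - 1) F d c hd hdr hc hcr hcF v h1 h2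
      (fun u hu => (hmax u hu).symm)).symm
end

section
/- Let $N = 2n$, let $m \le n$, let $1 \le p \le N-m$, and let $\nu = \{\nu_1 < \cdots < \nu_m\} \subseteq [1,N]$ be a Schubert symbol with $\nu \le \mathpzc{S}_p$ where $\mathpzc{S}_p = \{N+1-m-p, N+2-m, \ldots, N\}$. Set $I_1 = [1, N-m-p+1]$, $I_2 = [N-m-p+2, N]$, $r = \#(I_1 \cap \nu)$, write $I_1 \cap \nu = \{a_1 < \cdots < a_r\}$ and $I_2 \setminus \nu = \{b_1 < \cdots < b_{p+r-1}\}$. If in the sum $\sum_{1 \le c_1 < \cdots < c_p \le p+r-1} \prod_{i=1}^p (t_{b_{c_i}} - t_{a_{c_i-i+1}})$ some factor equals $t_{n+1} - t_n$ (i.e. $b_{c_i} = n+1$ and $a_{c_i - i + 1} = n$ for some admissible sequence and index $i$), then $I_1 = [1,n]$ and $I_1 \cap \nu = \{n\}$ (in particular $r = 1$, $a_1 = n$, $b_1 = n+1$, and $N-m-p+1 = n$). -/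
open Finset

lemma smOn_gap (f : ℕ → ℕ) (P : ℕ) (hf : StrictMonoOn f (Set.Icc 1 P)) :
    ∀ d i, 1 ≤ i → i + d ≤ P → f i + d ≤ f (i + d) := by
  intro d
  induction d with
  | zero => intro i _ _; simp
  | succ d ih =>
    intro i h1 h2
    have h3 := ih i h1 (by omega)
    have h4 : f (i + d) < f (i + d + 1) :=
      hf ⟨by omega, by omega⟩ ⟨by omega, by omega⟩ (by omega)
    have h5 : i + (d + 1) = i + d + 1 := by omega
    rw [h5]
    omega

/-- Corollary A.3 of the paper (`N = 2n`).  Let `ν` be a Schubert symbol for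
`Gr(m, 2n)` dominated by the special symbol `𝒮_p`, encoded 1-based as a
strictly increasing function `v` on `[1,m]` with values in `[1,2n]`.  Let
`I₁ = [1, 2n-m-p+1]`, `I₂ = [2n-m-p+2, 2n]`, `r = #(I₁ ∩ ν)`, and let `a`, `b`
enumerate `I₁ ∩ ν` and `I₂ \ ν` increasingly.  If some factor of the summation
equals `t_{n+1} - t_n`, i.e. `b_{c_i} = n+1` and `a_{c_i - i + 1} = n` for some
strictly increasing sequence `c : [1,p] → [1,p+r-1]` and index `i`, then
`I₁ = [1,n]` and `I₁ ∩ ν = {n}` (in particular `r = 1`, `a_1 = n`,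
`b_1 = n+1`, and `2n-m-p+1 = n`). -/
theorem bad_factor_forces_degenerate_case (n m p : ℕ)
    (hm1 : 1 ≤ m) (hm : m ≤ n) (hp1 : 1 ≤ p) (hp2 : p ≤ 2 * n - m)
    (v : ℕ → ℕ) (hv : StrictMonoOn v (Set.Icc 1 m))
    (hvr : ∀ j ∈ Finset.Icc 1 m, v j ∈ Finset.Icc 1 (2 * n))
    (hdom : ∀ j ∈ Finset.Icc 1 m,
      v j ≤ if j = 1 then 2 * n + 1 - m - p else 2 * n - m + j)
    (r : ℕ)
    (hr : r = ((Finset.Icc 1 (2 * n - m - p + 1)) ∩ (Finset.Icc 1 m).image v).card)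
    (a b : ℕ → ℕ)
    (ha : StrictMonoOn a (Set.Icc 1 r))
    (haim : (Finset.Icc 1 r).image a
      = (Finset.Icc 1 (2 * n - m - p + 1)) ∩ (Finset.Icc 1 m).image v)
    (hb : StrictMonoOn b (Set.Icc 1 (p + r - 1)))
    (hbim : (Finset.Icc 1 (p + r - 1)).image b
      = (Finset.Icc (2 * n - m - p + 2) (2 * n)) \ (Finset.Icc 1 m).image v)
    (c : ℕ → ℕ) (hc : StrictMonoOn c (Set.Icc 1 p))
    (hcr : ∀ i ∈ Finset.Icc 1 p, c i ∈ Finset.Icc 1 (p + r - 1))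
    (i : ℕ) (hi : i ∈ Finset.Icc 1 p)
    (hbn : b (c i) = n + 1) (han : a (c i - i + 1) = n) :
    Finset.Icc 1 (2 * n - m - p + 1) = Finset.Icc 1 n ∧
    (Finset.Icc 1 (2 * n - m - p + 1)) ∩ (Finset.Icc 1 m).image v = {n} ∧
    r = 1 ∧ a 1 = n ∧ b 1 = n + 1 ∧ 2 * n - m - p + 1 = n := by
  clear hv hvr hdom hr
  simp only [Finset.mem_Icc] at hi
  obtain ⟨hi1, hi2⟩ := hi
  have hc1 := hcr 1 (by simp [Finset.mem_Icc, hp1])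
  have hcp := hcr p (by simp [Finset.mem_Icc, hp1])
  have hci := hcr i (by simp [Finset.mem_Icc]; omega)
  simp only [Finset.mem_Icc] at hc1 hcp hci
  have g1 : c 1 + (i - 1) ≤ c i := by
    have h := smOn_gap c p hc (i - 1) 1 le_rfl (by omega)
    have : 1 + (i - 1) = i := by omega
    rwa [this] at h
  have g2 : c i + (p - i) ≤ c p := by
    have h := smOn_gap c p hc (p - i) i hi1 (by omega)
    have : i + (p - i) = p := by omega
    rwa [this] at h
  have hile : i ≤ c i := by omega
  have hup : c i + (p - i) ≤ p + r - 1 := le_trans g2 hcp.2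
  have hr1 : 1 ≤ r := by omega
  have hq1 : 1 ≤ c i - i + 1 := by omega
  have hqr : c i - i + 1 ≤ r := by omega
  have hnmem : n ∈ (Finset.Icc 1 (2 * n - m - p + 1)) ∩ (Finset.Icc 1 m).image v := by
    rw [← haim, ← han]
    exact Finset.mem_image_of_mem a (Finset.mem_Icc.mpr ⟨hq1, hqr⟩)
  have hnI1 : n ≤ 2 * n - m - p + 1 :=
    (Finset.mem_Icc.mp (Finset.mem_inter.mp hnmem).1).2
  have hn1mem : n + 1 ∈ (Finset.Icc (2 * n - m - p + 2) (2 * n)) \ (Finset.Icc 1 m).image v := by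
    rw [← hbim, ← hbn]
    exact Finset.mem_image_of_mem b (Finset.mem_Icc.mpr ⟨by omega, hci.2⟩)
  have hn1I2 : 2 * n - m - p + 2 ≤ n + 1 :=
    (Finset.mem_Icc.mp (Finset.mem_sdiff.mp hn1mem).1).1
  have heq : 2 * n - m - p + 1 = n := by omega
  have hb1mem : b 1 ∈ (Finset.Icc (2 * n - m - p + 2) (2 * n)) \ (Finset.Icc 1 m).image v := by
    rw [← hbim]
    exact Finset.mem_image_of_mem b (Finset.mem_Icc.mpr ⟨le_rfl, by omega⟩)
  have hb1ge : n + 1 ≤ b 1 := by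
    have := (Finset.mem_Icc.mp (Finset.mem_sdiff.mp hb1mem).1).1
    omega
  have hb1le : b 1 ≤ b (c i) :=
    hb.monotoneOn ⟨le_rfl, by omega⟩ ⟨by omega, hci.2⟩ hci.1
  have hb1 : b 1 = n + 1 := by omega
  have hcieq : c i = 1 := by
    have := hb.injOn ⟨hci.1, hci.2⟩ ⟨le_rfl, by omega⟩
      (by rw [hbn, hb1])
    omega
  have hieq : i = 1 := by omega
  have ha1 : a 1 = n := by
    have h : c i - i + 1 = 1 := by omega
    rwa [h] at han
  have hreq : r = 1 := by
    by_contra hne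
    have hr2 : 2 ≤ r := by omega
    have ha2mem : a 2 ∈ (Finset.Icc 1 (2 * n - m - p + 1)) ∩ (Finset.Icc 1 m).image v := by
      rw [← haim]
      exact Finset.mem_image_of_mem a (Finset.mem_Icc.mpr ⟨by omega, hr2⟩)
    have ha2le : a 2 ≤ n := by
      have := (Finset.mem_Icc.mp (Finset.mem_inter.mp ha2mem).1).2
      omega
    have : a 1 < a 2 := ha ⟨le_rfl, by omega⟩ ⟨by omega, hr2⟩ one_lt_two
    omega
  refine ⟨by rw [heq], ?_, hreq, ha1, hb1, heq⟩
  rw [← haim, hreq]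
  simp [ha1]
end
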